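/- Let p ≥ 1 be an integer, n = 2p, and let m ≥ 2n−1, l ≥ 0, and N ≥ 1 be integers. Let P(z) = Σ_{γ∈Γ_G(N)} det(A_γ z + B_γ)^l · det(C_γ z + D_γ)^{−(l+m)}, which converges absolutely on Ω. Then for every γ₀ = [[A, B],[C, D]] ∈ Γ_G(N) and every z ∈ Ω one has P((Az+B)(Cz+D)^{−1}) = det(Cz+D)^m · P(z). -/

import Mathlib

open Matrix
open scoped ComplexOrder

namespace stmt11

variable (p N : ℕ)

/-- The matrix `I_{p,p} = diag(I_p, −I_p)`. -/
def Ipp : Matrix (Fin p ⊕ Fin p) (Fin p ⊕ Fin p) ℂ := Matrix.fromBlocks 1 0 0 (-1)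

/-- Membership in `Γ_G(N) = SU(p,p) ∩ (I_n + M_n(N·ℤ[i]))`. -/
def inGamma (γ : Matrix (Fin p ⊕ Fin p) (Fin p ⊕ Fin p) ℂ) : Prop :=
  γ.det = 1 ∧ γᴴ * Ipp p * γ = Ipp p ∧
    ∀ i j, ∃ a b : ℤ, γ i j - (1 : Matrix (Fin p ⊕ Fin p) (Fin p ⊕ Fin p) ℂ) i j =
      (N : ℂ) * ((a : ℂ) + (b : ℂ) * Complex.I)

/-- The bounded domain `Ω = {z ∈ M_p(ℂ) : I_p − z*z > 0}`. -/
def Omega : Set (Matrix (Fin p) (Fin p) ℂ) := {z | (1 - zᴴ * z).PosDef}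

/-- The term `det(A_γ z + B_γ)^l · det(C_γ z + D_γ)^{−(l+m)}` of the Poincaré series. -/
noncomputable def term (l m : ℕ) (γ : Matrix (Fin p ⊕ Fin p) (Fin p ⊕ Fin p) ℂ)
    (z : Matrix (Fin p) (Fin p) ℂ) : ℂ :=
  (γ.toBlocks₁₁ * z + γ.toBlocks₁₂).det ^ l *
    (γ.toBlocks₂₁ * z + γ.toBlocks₂₂).det ^ (-((l : ℤ) + (m : ℤ)))

/-- The Poincaré series `P(z) = Σ_{γ ∈ Γ_G(N)} det(A_γ z+B_γ)^l det(C_γ z+D_γ)^{−(l+m)}`. -/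
noncomputable def P (l m : ℕ) (z : Matrix (Fin p) (Fin p) ℂ) : ℂ :=
  ∑' γ : {γ // inGamma p N γ}, term p l m (γ : Matrix (Fin p ⊕ Fin p) (Fin p ⊕ Fin p) ℂ) z

end stmt11

namespace stmt11aux

/-! ### Gaussian integers inside ℂ -/

def Gss (x : ℂ) : Prop := ∃ a b : ℤ, x = a + b * Complex.I

lemma Gss.add {x y : ℂ} (hx : Gss x) (hy : Gss y) : Gss (x + y) := by
  obtain ⟨a, b, rfl⟩ := hx; obtain ⟨c, d, rfl⟩ := hy
  exact ⟨a + c, b + d, by push_cast; ring⟩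

lemma Gss.mul {x y : ℂ} (hx : Gss x) (hy : Gss y) : Gss (x * y) := by
  obtain ⟨a, b, rfl⟩ := hx; obtain ⟨c, d, rfl⟩ := hy
  refine ⟨a * c - b * d, a * d + b * c, ?_⟩
  push_cast
  linear_combination (b * d : ℂ) * Complex.I_sq

lemma Gss.zero : Gss 0 := ⟨0, 0, by simp⟩
lemma Gss.one : Gss 1 := ⟨1, 0, by simp⟩
lemma Gss.neg {x : ℂ} (hx : Gss x) : Gss (-x) := by
  obtain ⟨a, b, rfl⟩ := hx; exact ⟨-a, -b, by push_cast; ring⟩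
lemma Gss.natCast (N : ℕ) : Gss (N : ℂ) := ⟨N, 0, by push_cast; ring⟩
lemma Gss.conj {x : ℂ} (hx : Gss x) : Gss (star x) := by
  obtain ⟨a, b, rfl⟩ := hx
  exact ⟨a, -b, by
    show (starRingEnd ℂ) _ = _
    push_cast [map_add, _root_.map_mul, Complex.conj_I, map_intCast]; ring⟩

lemma Gss.sum {ι : Type*} (s : Finset ι) (f : ι → ℂ) (h : ∀ i ∈ s, Gss (f i)) :
    Gss (∑ i ∈ s, f i) := by
  classical
  induction s using Finset.induction with
  | empty => simpa using Gss.zero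
  | insert a s hi ih =>
    rw [Finset.sum_insert hi]
    exact (h _ (Finset.mem_insert_self _ _)).add
      (ih fun i his => h i (Finset.mem_insert_of_mem his))

open stmt11

variable {p N : ℕ}

abbrev Mat (p : ℕ) := Matrix (Fin p ⊕ Fin p) (Fin p ⊕ Fin p) ℂ

lemma Gss_one_apply (i j : Fin p ⊕ Fin p) : Gss ((1 : Mat p) i j) := by
  by_cases h : i = j
  · subst h; rw [Matrix.one_apply_eq]; exact Gss.one
  · rw [Matrix.one_apply_ne h]; exact Gss.zero

/-- Restated congruence condition. -/
def GssMod (N : ℕ) (γ : Mat p) : Prop :=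
  ∀ i j, ∃ g, Gss g ∧ γ i j = (1 : Mat p) i j + (N : ℂ) * g

lemma gssMod_iff (γ : Mat p) :
    (∀ i j, ∃ a b : ℤ, γ i j - (1 : Mat p) i j =
        (N : ℂ) * ((a : ℂ) + (b : ℂ) * Complex.I)) ↔ GssMod N γ := by
  constructor
  · intro h i j
    obtain ⟨a, b, hab⟩ := h i j
    exact ⟨a + b * Complex.I, ⟨a, b, rfl⟩, by linear_combination hab⟩
  · intro h i j
    obtain ⟨g, ⟨a, b, rfl⟩, hg⟩ := h i j
    exact ⟨a, b, by linear_combination hg⟩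

lemma GssMod.entry {γ : Mat p} (h : GssMod N γ) (i j : Fin p ⊕ Fin p) : Gss (γ i j) := by
  obtain ⟨g, hg, hγ⟩ := h i j
  rw [hγ]
  exact (Gss_one_apply i j).add ((Gss.natCast N).mul hg)

lemma GssMod.mul {γ δ : Mat p} (hγ : GssMod N γ) (hδ : GssMod N δ) : GssMod N (γ * δ) := by
  intro i j
  choose g hg hγg using hγ
  obtain ⟨h0, hh0, hδh⟩ := hδ i j
  refine ⟨h0 + ∑ k, g i k * δ k j,
    hh0.add (Gss.sum _ _ fun k _ => (hg i k).mul (hδ.entry k j)), ?_⟩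
  rw [Matrix.mul_apply]
  calc ∑ k, γ i k * δ k j
      = ∑ k, ((1 : Mat p) i k * δ k j + (N : ℂ) * (g i k * δ k j)) :=
        Finset.sum_congr rfl fun k _ => by rw [hγg i k]; ring
    _ = (∑ k, (1 : Mat p) i k * δ k j) + (N : ℂ) * ∑ k, g i k * δ k j := by
        rw [Finset.sum_add_distrib, Finset.mul_sum]
    _ = δ i j + (N : ℂ) * ∑ k, g i k * δ k j := by
        rw [← Matrix.mul_apply, Matrix.one_mul]
    _ = (1 : Mat p) i j + (N : ℂ) * (h0 + ∑ k, g i k * δ k j) := by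
        rw [hδh]; ring

/-! ### Basic facts about `Ipp` -/

def sgn (p : ℕ) : Fin p ⊕ Fin p → ℂ := Sum.elim (fun _ => 1) (fun _ => -1)

lemma Ipp_eq_diagonal : Ipp p = Matrix.diagonal (sgn p) := by
  ext i j
  cases i <;> cases j <;>
    simp [Ipp, sgn, Matrix.diagonal, Matrix.one_apply, Matrix.fromBlocks] <;>
    aesop

lemma sgn_mul_self (i : Fin p ⊕ Fin p) : sgn p i * sgn p i = 1 := by
  cases i <;> simp [sgn]

lemma Gss_sgn (i : Fin p ⊕ Fin p) : Gss (sgn p i) := by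
  cases i
  · exact Gss.one
  · exact Gss.one.neg

lemma Ipp_mul_Ipp : Ipp p * Ipp p = 1 := by
  rw [Ipp_eq_diagonal, Matrix.diagonal_mul_diagonal]
  rw [show (fun i => sgn p i * sgn p i) = fun _ => (1 : ℂ) from funext sgn_mul_self]
  exact Matrix.diagonal_one

lemma Ipp_conjTranspose : (Ipp p)ᴴ = Ipp p := by
  rw [Ipp, Matrix.fromBlocks_conjTranspose]
  simp

lemma Ipp_cancel (X : Mat p) : Ipp p * (Ipp p * X) = X := by
  rw [← Matrix.mul_assoc, Ipp_mul_Ipp, Matrix.one_mul]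

lemma GssMod.invmat {γ : Mat p} (hγ : GssMod N γ) : GssMod N (Ipp p * γᴴ * Ipp p) := by
  intro i j
  obtain ⟨g, hg, hγg⟩ := hγ j i
  refine ⟨sgn p i * sgn p j * star g, ((Gss_sgn i).mul (Gss_sgn j)).mul hg.conj, ?_⟩
  rw [Ipp_eq_diagonal]
  rw [Matrix.mul_diagonal, Matrix.diagonal_mul, Matrix.conjTranspose_apply, hγg]
  have hstar1 : star ((1 : Mat p) j i) = (1 : Mat p) j i := by
    by_cases h : j = i <;> simp [Matrix.one_apply, h]
  have h1 : sgn p i * sgn p j * ((1 : Mat p) j i) = (1 : Mat p) i j := by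
    by_cases h : j = i
    · subst h; rw [Matrix.one_apply_eq, mul_one, sgn_mul_self]
    · rw [Matrix.one_apply_ne h, Matrix.one_apply_ne (Ne.symm h), mul_zero]
  calc sgn p i * star ((1 : Mat p) j i + (N : ℂ) * g) * sgn p j
      = sgn p i * sgn p j * ((1 : Mat p) j i) +
          (N : ℂ) * (sgn p i * sgn p j * star g) := by
        rw [star_add, star_mul', hstar1]
        push_cast [star_natCast]
        ring
    _ = (1 : Mat p) i j + (N : ℂ) * (sgn p i * sgn p j * star g) := by rw [h1]

/-! ### Group structure of `Γ_G(N)` -/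

lemma inGamma_mul {γ δ : Mat p} (hγ : inGamma p N γ) (hδ : inGamma p N δ) :
    inGamma p N (γ * δ) := by
  obtain ⟨hγ1, hγ2, hγ3⟩ := hγ
  obtain ⟨hδ1, hδ2, hδ3⟩ := hδ
  refine ⟨by rw [Matrix.det_mul, hγ1, hδ1, one_mul], ?_, ?_⟩
  · rw [Matrix.conjTranspose_mul]
    calc δᴴ * γᴴ * (Ipp p) * (γ * δ) = δᴴ * (γᴴ * Ipp p * γ) * δ := by
          simp only [Matrix.mul_assoc]
      _ = Ipp p := by rw [hγ2, hδ2]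
  · exact (gssMod_iff _).mpr (((gssMod_iff _).mp hγ3).mul ((gssMod_iff _).mp hδ3))

lemma inGamma_inv {γ : Mat p} (hγ : inGamma p N γ) :
    inGamma p N (Ipp p * γᴴ * Ipp p) ∧
      (Ipp p * γᴴ * Ipp p) * γ = 1 ∧ γ * (Ipp p * γᴴ * Ipp p) = 1 := by
  obtain ⟨hγ1, hγ2, hγ3⟩ := hγ
  have hli : (Ipp p * γᴴ * Ipp p) * γ = 1 := by
    calc Ipp p * γᴴ * Ipp p * γ = Ipp p * (γᴴ * Ipp p * γ) := by
          simp only [Matrix.mul_assoc]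
      _ = Ipp p * Ipp p := by rw [hγ2]
      _ = 1 := Ipp_mul_Ipp
  have hri : γ * (Ipp p * γᴴ * Ipp p) = 1 := mul_eq_one_comm.mp hli
  have hdet : (Ipp p * γᴴ * Ipp p).det = 1 := by
    have h0 : (Ipp p).det * (Ipp p).det = 1 := by
      rw [← Matrix.det_mul, Ipp_mul_Ipp, Matrix.det_one]
    rw [Matrix.det_mul, Matrix.det_mul, Matrix.det_conjTranspose, hγ1]
    rw [star_one, mul_one]
    exact h0
  have hIγIpp : γ * Ipp p * γᴴ = Ipp p := by
    have h1 : γ * Ipp p * γᴴ * Ipp p = 1 := by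
      calc γ * Ipp p * γᴴ * Ipp p = γ * (Ipp p * γᴴ * Ipp p) := by
            simp only [Matrix.mul_assoc]
        _ = 1 := hri
    calc γ * Ipp p * γᴴ = γ * Ipp p * γᴴ * (Ipp p * Ipp p) := by
          rw [Ipp_mul_Ipp, Matrix.mul_one]
      _ = (γ * Ipp p * γᴴ * Ipp p) * Ipp p := by simp only [Matrix.mul_assoc]
      _ = Ipp p := by rw [h1, Matrix.one_mul]
  refine ⟨⟨hdet, ?_, ?_⟩, hli, hri⟩
  · calc (Ipp p * γᴴ * Ipp p)ᴴ * Ipp p * (Ipp p * γᴴ * Ipp p)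
        = Ipp p * (γ * (Ipp p * (Ipp p * (Ipp p * (γᴴ * Ipp p))))) := by
          simp only [Matrix.conjTranspose_mul, Ipp_conjTranspose,
            Matrix.conjTranspose_conjTranspose, Matrix.mul_assoc]
      _ = Ipp p * (γ * (Ipp p * (γᴴ * Ipp p))) := by rw [Ipp_cancel]
      _ = Ipp p * (γ * Ipp p * γᴴ) * Ipp p := by simp only [Matrix.mul_assoc]
      _ = Ipp p := by rw [hIγIpp, Ipp_mul_Ipp, Matrix.one_mul]
  · exact (gssMod_iff _).mpr (GssMod.invmat ((gssMod_iff _).mp hγ3))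

/-! ### Block relations and invertibility of `Cz + D` -/

lemma block_relations {γ : Mat p} (h : γᴴ * Ipp p * γ = Ipp p) :
    γ.toBlocks₁₁ᴴ * γ.toBlocks₁₁ - γ.toBlocks₂₁ᴴ * γ.toBlocks₂₁ = 1 ∧
    γ.toBlocks₁₁ᴴ * γ.toBlocks₁₂ - γ.toBlocks₂₁ᴴ * γ.toBlocks₂₂ = 0 ∧
    γ.toBlocks₁₂ᴴ * γ.toBlocks₁₂ - γ.toBlocks₂₂ᴴ * γ.toBlocks₂₂ = -1 := by
  set A := γ.toBlocks₁₁; set B := γ.toBlocks₁₂; set C := γ.toBlocks₂₁; set D := γ.toBlocks₂₂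
  have hγeq : γ = Matrix.fromBlocks A B C D := (Matrix.fromBlocks_toBlocks γ).symm
  rw [hγeq] at h
  rw [Ipp, Matrix.fromBlocks_conjTranspose, Matrix.fromBlocks_multiply,
    Matrix.fromBlocks_multiply] at h
  have h11 := congrArg Matrix.toBlocks₁₁ h
  have h12 := congrArg Matrix.toBlocks₁₂ h
  have h22 := congrArg Matrix.toBlocks₂₂ h
  simp only [Matrix.toBlocks_fromBlocks₁₁, Matrix.toBlocks_fromBlocks₁₂,
    Matrix.toBlocks_fromBlocks₂₂] at h11 h12 h22
  refine ⟨?_, ?_, ?_⟩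
  · rw [← h11]; noncomm_ring
  · rw [← h12]; noncomm_ring
  · rw [← h22]; noncomm_ring

lemma key_identity {γ : Mat p} (h : γᴴ * Ipp p * γ = Ipp p)
    (z : Matrix (Fin p) (Fin p) ℂ) :
    (γ.toBlocks₂₁ * z + γ.toBlocks₂₂)ᴴ * (γ.toBlocks₂₁ * z + γ.toBlocks₂₂) =
      (γ.toBlocks₁₁ * z + γ.toBlocks₁₂)ᴴ * (γ.toBlocks₁₁ * z + γ.toBlocks₁₂) +
        (1 - zᴴ * z) := by
  obtain ⟨h1, h2, h3⟩ := block_relations h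
  set A := γ.toBlocks₁₁; set B := γ.toBlocks₁₂; set C := γ.toBlocks₂₁; set D := γ.toBlocks₂₂
  have h2' : Bᴴ * A - Dᴴ * C = 0 := by
    have := congrArg Matrix.conjTranspose h2
    simpa only [Matrix.conjTranspose_sub, Matrix.conjTranspose_mul,
      Matrix.conjTranspose_conjTranspose, Matrix.conjTranspose_zero] using this
  have expand :
      (C * z + D)ᴴ * (C * z + D) - (A * z + B)ᴴ * (A * z + B) =
        zᴴ * (Cᴴ * C - Aᴴ * A) * z + zᴴ * (Cᴴ * D - Aᴴ * B) +
          (Dᴴ * C - Bᴴ * A) * z + (Dᴴ * D - Bᴴ * B) := by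
    simp only [Matrix.conjTranspose_add, Matrix.conjTranspose_mul]
    noncomm_ring
  have e1 : Cᴴ * C - Aᴴ * A = -1 := by rw [← neg_sub, h1]
  have e2 : Cᴴ * D - Aᴴ * B = 0 := by rw [← neg_sub, h2, neg_zero]
  have e3 : Dᴴ * C - Bᴴ * A = 0 := by rw [← neg_sub, h2', neg_zero]
  have e4 : Dᴴ * D - Bᴴ * B = 1 := by rw [← neg_sub, h3, neg_neg]
  rw [e1, e2, e3, e4] at expand
  have expand2 : (C * z + D)ᴴ * (C * z + D) - (A * z + B)ᴴ * (A * z + B) = 1 - zᴴ * z := by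
    rw [expand]
    simp only [Matrix.mul_zero, Matrix.zero_mul, add_zero]
    noncomm_ring
  linear_combination (norm := noncomm_ring) expand2

lemma det_CzD_ne_zero {γ : Mat p} (h : γᴴ * Ipp p * γ = Ipp p)
    {z : Matrix (Fin p) (Fin p) ℂ} (hz : z ∈ Omega p) :
    (γ.toBlocks₂₁ * z + γ.toBlocks₂₂).det ≠ 0 := by
  have hpd : ((γ.toBlocks₂₁ * z + γ.toBlocks₂₂)ᴴ * (γ.toBlocks₂₁ * z + γ.toBlocks₂₂)).PosDef := by
    rw [key_identity h z]
    exact Matrix.PosDef.posSemidef_add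
      (Matrix.posSemidef_conjTranspose_mul_self _) hz
  have hdet : ((γ.toBlocks₂₁ * z + γ.toBlocks₂₂)ᴴ * (γ.toBlocks₂₁ * z + γ.toBlocks₂₂)).det ≠ 0 :=
    hpd.det_pos.ne'
  rw [Matrix.det_mul] at hdet
  exact right_ne_zero_of_mul hdet

/-! ### Block cocycle identities -/

lemma blocks_mul₁₁ (γ δ : Mat p) : (γ * δ).toBlocks₁₁ =
    γ.toBlocks₁₁ * δ.toBlocks₁₁ + γ.toBlocks₁₂ * δ.toBlocks₂₁ := by
  conv_lhs => rw [← Matrix.fromBlocks_toBlocks γ, ← Matrix.fromBlocks_toBlocks δ,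
    Matrix.fromBlocks_multiply]
  rw [Matrix.toBlocks_fromBlocks₁₁]

lemma blocks_mul₁₂ (γ δ : Mat p) : (γ * δ).toBlocks₁₂ =
    γ.toBlocks₁₁ * δ.toBlocks₁₂ + γ.toBlocks₁₂ * δ.toBlocks₂₂ := by
  conv_lhs => rw [← Matrix.fromBlocks_toBlocks γ, ← Matrix.fromBlocks_toBlocks δ,
    Matrix.fromBlocks_multiply]
  rw [Matrix.toBlocks_fromBlocks₁₂]

lemma blocks_mul₂₁ (γ δ : Mat p) : (γ * δ).toBlocks₂₁ =
    γ.toBlocks₂₁ * δ.toBlocks₁₁ + γ.toBlocks₂₂ * δ.toBlocks₂₁ := by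
  conv_lhs => rw [← Matrix.fromBlocks_toBlocks γ, ← Matrix.fromBlocks_toBlocks δ,
    Matrix.fromBlocks_multiply]
  rw [Matrix.toBlocks_fromBlocks₂₁]

lemma blocks_mul₂₂ (γ δ : Mat p) : (γ * δ).toBlocks₂₂ =
    γ.toBlocks₂₁ * δ.toBlocks₁₂ + γ.toBlocks₂₂ * δ.toBlocks₂₂ := by
  conv_lhs => rw [← Matrix.fromBlocks_toBlocks γ, ← Matrix.fromBlocks_toBlocks δ,
    Matrix.fromBlocks_multiply]
  rw [Matrix.toBlocks_fromBlocks₂₂]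

/-! ### Transformation of a single term -/

lemma term_transform (l m : ℕ) {γ γ₀ : Mat p}
    (hγ : γᴴ * Ipp p * γ = Ipp p) (hγ₀ : γ₀ᴴ * Ipp p * γ₀ = Ipp p)
    {z : Matrix (Fin p) (Fin p) ℂ} (hz : z ∈ Omega p) :
    term p l m γ
        ((γ₀.toBlocks₁₁ * z + γ₀.toBlocks₁₂) * (γ₀.toBlocks₂₁ * z + γ₀.toBlocks₂₂)⁻¹) =
      (γ₀.toBlocks₂₁ * z + γ₀.toBlocks₂₂).det ^ m * term p l m (γ * γ₀) z := by
  set A := γ.toBlocks₁₁; set B := γ.toBlocks₁₂; set C := γ.toBlocks₂₁; set D := γ.toBlocks₂₂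
  set A₀ := γ₀.toBlocks₁₁; set B₀ := γ₀.toBlocks₁₂
  set C₀ := γ₀.toBlocks₂₁; set D₀ := γ₀.toBlocks₂₂
  set Q := C₀ * z + D₀ with hQdef
  have hQ : Q.det ≠ 0 := det_CzD_ne_zero hγ₀ hz
  have hQinv : Q * Q⁻¹ = 1 := Matrix.mul_nonsing_inv _ (Ne.isUnit hQ)
  set w := (A₀ * z + B₀) * Q⁻¹ with hwdef
  have hAw : A * w + B = ((γ * γ₀).toBlocks₁₁ * z + (γ * γ₀).toBlocks₁₂) * Q⁻¹ := by
    rw [blocks_mul₁₁, blocks_mul₁₂]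
    have hB : B = B * (Q * Q⁻¹) := by rw [hQinv, Matrix.mul_one]
    calc A * ((A₀ * z + B₀) * Q⁻¹) + B = A * ((A₀ * z + B₀) * Q⁻¹) + B * (Q * Q⁻¹) := by
          rw [← hB]
      _ = (A * (A₀ * z + B₀) + B * Q) * Q⁻¹ := by noncomm_ring
      _ = ((A * A₀ + B * C₀) * z + (A * B₀ + B * D₀)) * Q⁻¹ := by
          rw [hQdef]; noncomm_ring
  have hCw : C * w + D = ((γ * γ₀).toBlocks₂₁ * z + (γ * γ₀).toBlocks₂₂) * Q⁻¹ := by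
    rw [blocks_mul₂₁, blocks_mul₂₂]
    have hD : D = D * (Q * Q⁻¹) := by rw [hQinv, Matrix.mul_one]
    calc C * ((A₀ * z + B₀) * Q⁻¹) + D = C * ((A₀ * z + B₀) * Q⁻¹) + D * (Q * Q⁻¹) := by
          rw [← hD]
      _ = (C * (A₀ * z + B₀) + D * Q) * Q⁻¹ := by noncomm_ring
      _ = ((C * A₀ + D * C₀) * z + (C * B₀ + D * D₀)) * Q⁻¹ := by
          rw [hQdef]; noncomm_ring
  rw [term, term, hAw, hCw]
  rw [Matrix.det_mul, Matrix.det_mul, Matrix.det_nonsing_inv, Ring.inverse_eq_inv']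
  set x := ((γ * γ₀).toBlocks₁₁ * z + (γ * γ₀).toBlocks₁₂).det
  set y := ((γ * γ₀).toBlocks₂₁ * z + (γ * γ₀).toBlocks₂₂).det
  set q := Q.det
  have hq : q ≠ 0 := hQ
  have hqpow : (q⁻¹ : ℂ) ^ l * q ^ ((l : ℤ) + (m : ℤ)) = q ^ m := by
    rw [zpow_add₀ hq, zpow_natCast, zpow_natCast, inv_pow, ← mul_assoc,
      inv_mul_cancel₀ (pow_ne_zero _ hq), one_mul]
  calc (x * q⁻¹) ^ l * (y * q⁻¹) ^ (-((l : ℤ) + (m : ℤ)))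
      = x ^ l * (q⁻¹) ^ l * (y ^ (-((l : ℤ) + (m : ℤ))) * (q⁻¹) ^ (-((l : ℤ) + (m : ℤ)))) := by
        rw [mul_pow, mul_zpow]
    _ = x ^ l * (q⁻¹) ^ l * (y ^ (-((l : ℤ) + (m : ℤ))) * q ^ ((l : ℤ) + (m : ℤ))) := by
        have hqq : (q⁻¹ : ℂ) ^ (-((l : ℤ) + (m : ℤ))) = q ^ ((l : ℤ) + (m : ℤ)) := by
          rw [_root_.inv_zpow, _root_.zpow_neg, inv_inv]
        rw [hqq]
    _ = ((q⁻¹) ^ l * q ^ ((l : ℤ) + (m : ℤ))) * (x ^ l * y ^ (-((l : ℤ) + (m : ℤ)))) := by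
        ring
    _ = q ^ m * (x ^ l * y ^ (-((l : ℤ) + (m : ℤ)))) := by rw [hqpow]

end stmt11aux

/-- The Poincaré series `P` satisfies the automorphy relation
`P((Az+B)(Cz+D)⁻¹) = det(Cz+D)^m · P(z)` for every `γ₀ = [[A,B],[C,D]] ∈ Γ_G(N)`, `z ∈ Ω`. -/
theorem stmt_11 (p : ℕ) (hp : 1 ≤ p) (n : ℕ) (hn : n = 2 * p) (m l N : ℕ)
    (hm : 2 * n - 1 ≤ m) (hN : 1 ≤ N)
    (γ₀ : Matrix (Fin p ⊕ Fin p) (Fin p ⊕ Fin p) ℂ) (hγ₀ : stmt11.inGamma p N γ₀)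
    (z : Matrix (Fin p) (Fin p) ℂ) (hz : z ∈ stmt11.Omega p) :
    stmt11.P p N l m
        ((γ₀.toBlocks₁₁ * z + γ₀.toBlocks₁₂) * (γ₀.toBlocks₂₁ * z + γ₀.toBlocks₂₂)⁻¹) =
      (γ₀.toBlocks₂₁ * z + γ₀.toBlocks₂₂).det ^ m * stmt11.P p N l m z := by
  classical
  obtain ⟨hγ₀inv, hli, hri⟩ := stmt11aux.inGamma_inv hγ₀
  set δ₀ := stmt11.Ipp p * γ₀ᴴ * stmt11.Ipp p with hδ₀def
  -- the right-multiplication equivalence on Γ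
  let e : {γ // stmt11.inGamma p N γ} ≃ {γ // stmt11.inGamma p N γ} :=
    { toFun := fun γ => ⟨(γ : stmt11aux.Mat p) * γ₀, stmt11aux.inGamma_mul γ.2 hγ₀⟩
      invFun := fun γ => ⟨(γ : stmt11aux.Mat p) * δ₀, stmt11aux.inGamma_mul γ.2 hγ₀inv⟩
      left_inv := fun γ => by
        apply Subtype.ext
        show (γ : stmt11aux.Mat p) * γ₀ * δ₀ = γ
        rw [Matrix.mul_assoc, hri, Matrix.mul_one]
      right_inv := fun γ => by
        apply Subtype.ext
        show (γ : stmt11aux.Mat p) * δ₀ * γ₀ = γ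
        rw [Matrix.mul_assoc, hli, Matrix.mul_one] }
  rw [stmt11.P, stmt11.P]
  have step1 : ∀ γ : {γ // stmt11.inGamma p N γ},
      stmt11.term p l m (γ : stmt11aux.Mat p)
          ((γ₀.toBlocks₁₁ * z + γ₀.toBlocks₁₂) * (γ₀.toBlocks₂₁ * z + γ₀.toBlocks₂₂)⁻¹) =
        (γ₀.toBlocks₂₁ * z + γ₀.toBlocks₂₂).det ^ m *
          stmt11.term p l m ((γ : stmt11aux.Mat p) * γ₀) z :=
    fun γ => stmt11aux.term_transform l m γ.2.2.1 hγ₀.2.1 hz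
  rw [tsum_congr step1, tsum_mul_left]
  congr 1
  calc ∑' γ : {γ // stmt11.inGamma p N γ},
        stmt11.term p l m ((γ : stmt11aux.Mat p) * γ₀) z
      = ∑' γ : {γ // stmt11.inGamma p N γ},
          stmt11.term p l m ((e γ : stmt11aux.Mat p)) z := rfl
    _ = ∑' γ : {γ // stmt11.inGamma p N γ},
          stmt11.term p l m (γ : stmt11aux.Mat p) z :=
        e.tsum_eq (fun γ => stmt11.term p l m (γ : stmt11aux.Mat p) z)
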